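/- If I = a + Σ_{i=1}^n a_i∂^{-1}b_i ∈ F⟨∂^{-1}⟩, then L(I) ≤ n; moreover I admits a presentation of the same form with exactly L(I) summands a_i∂^{-1}b_i. -/

import Mathlib

open Finset

/-- A derivation on a field `F`. -/
structure IsDerivation {F : Type*} [Field F] (d : F → F) : Prop where
  map_add : ∀ a b : F, d (a + b) = d a + d b
  leibniz : ∀ a b : F, d (a * b) = d a * b + a * d b

namespace IsDerivation

variable {F : Type*} [Field F] {d : F → F}

theorem map_zero' (hd : IsDerivation d) : d 0 = 0 := by
  have h := hd.map_add 0 0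
  simp only [add_zero] at h
  exact (left_eq_add.mp h)

theorem map_one' (hd : IsDerivation d) : d 1 = 0 := by
  have h := hd.leibniz 1 1
  simp only [mul_one, one_mul] at h
  exact (left_eq_add.mp h)

theorem map_neg' (hd : IsDerivation d) (a : F) : d (-a) = - d a := by
  have h := hd.map_add a (-a)
  simp only [add_neg_cancel, hd.map_zero'] at h
  exact (neg_eq_of_add_eq_zero_right h.symm).symm

end IsDerivation

/-- The subfield of constants of a derivation. -/
def constants (F : Type*) [Field F] (d : F → F) (hd : IsDerivation d) : Subfield F where
  carrier := {a : F | d a = 0}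
  zero_mem' := hd.map_zero'
  one_mem' := hd.map_one'
  add_mem' := by
    intro a b ha hb
    simp only [Set.mem_setOf_eq] at *
    rw [hd.map_add, ha, hb, add_zero]
  neg_mem' := by
    intro a ha
    simp only [Set.mem_setOf_eq] at *
    rw [hd.map_neg', ha, neg_zero]
  mul_mem' := by
    intro a b ha hb
    simp only [Set.mem_setOf_eq] at *
    rw [hd.leibniz, ha, hb, zero_mul, mul_zero, add_zero]
  inv_mem' := by
    intro a ha
    simp only [Set.mem_setOf_eq] at *
    by_cases h0 : a = 0
    · rw [h0, inv_zero]; exact hd.map_zero'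
    · have h := hd.leibniz a a⁻¹
      rw [mul_inv_cancel₀ h0, hd.map_one', ha, zero_mul, zero_add] at h
      have h2 : a * d a⁻¹ = 0 := h.symm
      rcases mul_eq_zero.mp h2 with h3 | h3
      · exact absurd h3 h0
      · exact h3
/-- `A` is the ring of differential operators `F⟨∂⟩` over the differential field `(F, d)`:
it contains `F` via `ι`, an element `δ` (the symbol `∂`) satisfying `∂a = a∂ + a'`, and every
element has a unique expression `Σ ι(aᵢ) ∂^i`. -/
structure IsDiffOpRing {F : Type*} [Field F] (d : F → F) (A : Type*) [Ring A]
    (ι : F →+* A) (δ : A) : Prop where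
  comm : ∀ a : F, δ * ι a = ι a * δ + ι (d a)
  repr : ∀ P : A, ∃! c : ℕ →₀ F, P = c.sum fun i x => ι x * δ ^ i

/-- The action of the differential operator with coefficients `a 0, …, a n`
(i.e. `Σ_{i ≤ n} aᵢ ∂^i`) on an element `y` of `F`. -/
def diffOpAct {F : Type*} [Field F] (d : F → F) (n : ℕ) (a : ℕ → F) (y : F) : F :=
  ∑ i ∈ Finset.range (n + 1), a i * d^[i] y

/-- A differential field is linearly differentially closed if every differential operator of
positive degree has a nonzero zero. -/
def LinDiffClosed {F : Type*} [Field F] (d : F → F) : Prop :=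
  ∀ (n : ℕ) (a : ℕ → F), 0 < n → a n ≠ 0 → ∃ y : F, y ≠ 0 ∧ diffOpAct d n a y = 0

/-- `P ∈ F⟨∂⟩` has degree `n`, i.e. `P = Σ_{i ≤ n} ι(aᵢ) δ^i` with `aₙ ≠ 0`. -/
def HasDeg {F : Type*} [Field F] {A : Type*} [Ring A] (ι : F →+* A) (δ : A)
    (P : A) (n : ℕ) : Prop :=
  ∃ a : ℕ → F, a n ≠ 0 ∧ P = ∑ i ∈ Finset.range (n + 1), ι (a i) * δ ^ i

/-- `K` is the division ring of quotients of the (Ore) domain `A`: `A` embeds in `K` via `j`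
and every element of `K` has the form `P⁻¹ Q` with `P, Q ∈ A`, `P ≠ 0`. -/
structure IsQuotientDivisionRing (A : Type*) [Ring A] (K : Type*) [DivisionRing K]
    (j : A →+* K) : Prop where
  inj : Function.Injective j
  quot : ∀ f : K, ∃ P Q : A, P ≠ 0 ∧ f = (j P)⁻¹ * j Q

/-- `f = P⁻¹ Q` is a minimal presentation of `f ∈ F(∂)`: a presentation where `P` has the
smallest possible degree. -/
def IsMinPres {F : Type*} [Field F] {A : Type*} [Ring A] (ι : F →+* A) (δ : A)
    {K : Type*} [DivisionRing K] (j : A →+* K) (f : K) (P Q : A) : Prop :=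
  P ≠ 0 ∧ f = (j P)⁻¹ * j Q ∧
    ∀ (P' Q' : A) (n n' : ℕ), P' ≠ 0 → f = (j P')⁻¹ * j Q' →
      HasDeg ι δ P n → HasDeg ι δ P' n' → n ≤ n'

/-- `f ∈ F(∂)` has length `n`: the smallest degree of `P` over all presentations
`f = P⁻¹ Q` is `n`. -/
def HasLength {F : Type*} [Field F] {A : Type*} [Ring A] (ι : F →+* A) (δ : A)
    {K : Type*} [DivisionRing K] (j : A →+* K) (f : K) (n : ℕ) : Prop :=
  (∃ P Q : A, P ≠ 0 ∧ f = (j P)⁻¹ * j Q ∧ HasDeg ι δ P n) ∧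
  ∀ (P Q : A) (m : ℕ), P ≠ 0 → f = (j P)⁻¹ * j Q → HasDeg ι δ P m → n ≤ m

/-!
Left multiplication by an operator `P` sends `x ∂⁻¹ y` to `P(x) ∂⁻¹ y` modulo `F⟨∂⟩`, where `P(x)`
is the action of `P` on `F`. Hence `P I ∈ F⟨∂⟩` as soon as `P` kills `a₁, …, aₙ`, and such a `P`
of degree at most `n` always exists (compose the first-order operators `∂ - y'/y`): `L(I) ≤ n`.
Conversely, if the `bᵢ` are linearly independent over the constants, `Σ cᵢ ∂⁻¹ bᵢ ∈ F⟨∂⟩` forces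
every `cᵢ = 0`, since otherwise it reduces to `c ∂⁻¹ b ∈ F⟨∂⟩` with `b, c ≠ 0`, i.e.
`∂⁻¹ ∈ F⟨∂⟩`. So an operator `P` with `P I ∈ F⟨∂⟩` kills the `aᵢ`, and if these are independent as
well, `deg P ≥ n`, because a nonzero operator of degree `m` has at most `m` solutions independent
over the constants. Finally, constants commute with `∂⁻¹`, so a presentation with the fewest terms
has independent `aᵢ` and independent `bᵢ`, and therefore exactly `L(I)` terms.
-/

theorem exists_eq_sum_smul_succAbove_of_not_linearIndependent {R V : Type*} [DivisionRing R]
    [AddCommGroup V] [Module R V] {m : ℕ} {v : Fin (m + 1) → V}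
    (hv : ¬LinearIndependent R v) : ∃ k, ∃ μ : Fin m → R, v k = ∑ i, μ i • v (k.succAbove i) := by
  rw [linearIndependent_iff_notMem_span] at hv
  simp only [not_forall, not_not] at hv
  obtain ⟨k, hk⟩ := hv
  rw [← Set.compl_eq_univ_sdiff, ← Fin.range_succAbove, ← Set.range_comp] at hk
  obtain ⟨μ, hμ⟩ := (Submodule.mem_span_range_iff_exists_fun R).1 hk
  exact ⟨k, μ, hμ.symm⟩

namespace IsDerivation

variable {F : Type*} [Field F] {d : F → F} (hd : IsDerivation d)

theorem mem_constants {x : F} : x ∈ constants F d hd ↔ d x = 0 := Iff.rfl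

def toLinearMap : F →ₗ[constants F d hd] F where
  toFun := d
  map_add' := hd.map_add
  map_smul' c x := by
    change d (c * x) = c * d x
    rw [hd.leibniz, hd.mem_constants.1 c.2, zero_mul, zero_add]

theorem toLinearMap_apply (x : F) : hd.toLinearMap x = d x := rfl

theorem div_mem_constants {u v : F} (hv : v ≠ 0) (h : d u - d v / v * u = 0) :
    u / v ∈ constants F d hd := by
  have hl := hd.leibniz (u / v) v
  rw [div_mul_cancel₀ u hv] at hl
  have : d (u / v) * v = 0 := by linear_combination h - hl
  exact (mul_eq_zero.1 this).resolve_right hv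

end IsDerivation

namespace IsDiffOpRing

variable {F : Type*} [Field F] {d : F → F} {A : Type*} [Ring A] {ι : F →+* A} {δ : A}

theorem repr_injective (hA : IsDiffOpRing d A ι δ) {c c' : ℕ →₀ F}
    (h : (c.sum fun i x => ι x * δ ^ i) = c'.sum fun i x => ι x * δ ^ i) : c = c' := by
  obtain ⟨_, -, hu⟩ := hA.repr (c.sum fun i x => ι x * δ ^ i)
  exact (hu c rfl).trans (hu c' h).symm

theorem delta_ne_zero (hA : IsDiffOpRing d A ι δ) : δ ≠ 0 := by
  intro h
  have := hA.repr_injective (c := Finsupp.single 1 1) (c' := 0) (by simp [h])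
  exact one_ne_zero (Finsupp.single_eq_zero.1 this)

theorem exists_eq_mul_delta_add (hA : IsDiffOpRing d A ι δ) (P : A) :
    ∃ (R : A) (c : F), P = R * δ + ι c := by
  obtain ⟨p, rfl, -⟩ := hA.repr P
  refine Finset.sum_induction _ (fun P => ∃ (R : A) (c : F), P = R * δ + ι c) ?_ ?_ ?_
  · rintro _ _ ⟨R, c, rfl⟩ ⟨R', c', rfl⟩
    exact ⟨R + R', c + c', by rw [map_add, add_mul]; abel⟩
  · exact ⟨0, 0, by simp⟩
  · rintro (_ | i) -
    · exact ⟨0, p 0, by simp⟩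
    · exact ⟨ι (p (i + 1)) * δ ^ i, 0, by rw [map_zero, add_zero, mul_assoc, ← pow_succ]⟩

theorem eq_zero_of_mul_delta_eq_iota (hA : IsDiffOpRing d A ι δ) {R : A} {x : F}
    (h : R * δ = ι x) : x = 0 := by
  obtain ⟨r, hr, -⟩ := hA.repr R
  have hshift : r.mapDomain Nat.succ = Finsupp.single 0 x := by
    refine hA.repr_injective ?_
    rw [Finsupp.sum_mapDomain_index (fun _ => by simp) (fun _ _ _ => by rw [map_add, add_mul]),
      Finsupp.sum_single_index (by simp), pow_zero, mul_one, ← h, hr, Finsupp.sum_mul]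
    simp only [pow_succ, mul_assoc]
  simpa using (DFunLike.congr_fun hshift 0).symm.trans
    (Finsupp.mapDomain_of_notMem_range _ _ (by simp))

theorem delta_sub_iota_ne_zero (hA : IsDiffOpRing d A ι δ) (x : F) : δ - ι x ≠ 0 := by
  intro h
  have hx := hA.eq_zero_of_mul_delta_eq_iota (R := 1) (by rw [one_mul]; exact sub_eq_zero.1 h)
  rw [hx, map_zero, sub_zero] at h
  exact hA.delta_ne_zero h

/-- `A = A δ ⊕ ι F`; the constant term is the second component. -/
noncomputable def constTerm (hA : IsDiffOpRing d A ι δ) (P : A) : F :=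
  (hA.exists_eq_mul_delta_add P).choose_spec.choose

theorem exists_eq_mul_delta_add_constTerm (hA : IsDiffOpRing d A ι δ) (P : A) :
    ∃ R, P = R * δ + ι (hA.constTerm P) :=
  ⟨_, (hA.exists_eq_mul_delta_add P).choose_spec.choose_spec⟩

theorem constTerm_eq (hA : IsDiffOpRing d A ι δ) {P R : A} {c : F} (h : P = R * δ + ι c) :
    hA.constTerm P = c := by
  obtain ⟨R', hR'⟩ := hA.exists_eq_mul_delta_add_constTerm P
  have : (R' - R) * δ = ι (c - hA.constTerm P) := by
    rw [sub_mul, map_sub, sub_eq_sub_iff_add_eq_add, ← hR', h, add_comm]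
  exact (sub_eq_zero.1 (hA.eq_zero_of_mul_delta_eq_iota this)).symm

/-- The action of operators on `F`: `P(y)` is the constant term of `P * y`. -/
noncomputable def act (hA : IsDiffOpRing d A ι δ) (P : A) (y : F) : F :=
  hA.constTerm (P * ι y)

theorem exists_mul_iota_eq (hA : IsDiffOpRing d A ι δ) (P : A) (y : F) :
    ∃ R, P * ι y = R * δ + ι (hA.act P y) :=
  hA.exists_eq_mul_delta_add_constTerm _

theorem act_eq (hA : IsDiffOpRing d A ι δ) {P R : A} {y c : F}
    (h : P * ι y = R * δ + ι c) : hA.act P y = c :=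
  hA.constTerm_eq h

theorem act_iota (hA : IsDiffOpRing d A ι δ) (x y : F) : hA.act (ι x) y = x * y :=
  hA.act_eq (R := 0) (by rw [← map_mul, zero_mul, zero_add])

theorem act_delta (hA : IsDiffOpRing d A ι δ) (y : F) : hA.act δ y = d y :=
  hA.act_eq (hA.comm y)

theorem act_zero_right (hA : IsDiffOpRing d A ι δ) (P : A) : hA.act P 0 = 0 :=
  hA.act_eq (R := 0) (by simp)

theorem act_sub (hA : IsDiffOpRing d A ι δ) (P Q : A) (y : F) :
    hA.act (P - Q) y = hA.act P y - hA.act Q y := by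
  obtain ⟨R, hR⟩ := hA.exists_mul_iota_eq P y
  obtain ⟨R', hR'⟩ := hA.exists_mul_iota_eq Q y
  exact hA.act_eq (R := R - R') (by rw [sub_mul, hR, hR', map_sub, sub_mul]; abel)

theorem act_mul (hA : IsDiffOpRing d A ι δ) (P Q : A) (y : F) :
    hA.act (P * Q) y = hA.act P (hA.act Q y) := by
  obtain ⟨R, hR⟩ := hA.exists_mul_iota_eq Q y
  obtain ⟨S, hS⟩ := hA.exists_mul_iota_eq P (hA.act Q y)
  exact hA.act_eq (R := P * R + S)
    (by rw [mul_assoc, hR, mul_add, hS, add_mul, mul_assoc, add_assoc])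

theorem act_delta_sub_logDeriv (hA : IsDiffOpRing d A ι δ) (u v : F) :
    hA.act (δ - ι (d v / v)) u = d u - d v / v * u := by
  rw [act_sub, act_delta, act_iota]

theorem act_delta_sub_logDeriv_self (hA : IsDiffOpRing d A ι δ) (hd : IsDerivation d) (v : F) :
    hA.act (δ - ι (d v / v)) v = 0 := by
  rw [hA.act_delta_sub_logDeriv]
  rcases eq_or_ne v 0 with rfl | hv
  · simp [hd.map_zero']
  · rw [div_mul_cancel₀ _ hv, sub_self]

end IsDiffOpRing

section Degree

variable {F : Type*} [Field F] {d : F → F} {A : Type*} [Ring A] {ι : F →+* A} {δ : A}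

variable (ι δ) in
def degLT (N : ℕ) : AddSubgroup A where
  carrier := {P | ∃ p : ℕ → F, P = ∑ i ∈ range N, ι (p i) * δ ^ i}
  add_mem' := by
    rintro _ _ ⟨p, rfl⟩ ⟨q, rfl⟩
    exact ⟨p + q, by simp only [Pi.add_apply, map_add, add_mul, Finset.sum_add_distrib]⟩
  zero_mem' := ⟨0, by simp⟩
  neg_mem' := by
    rintro _ ⟨p, rfl⟩
    exact ⟨-p, by simp⟩

theorem degLT_zero : degLT ι δ 0 = ⊥ := by
  ext P
  exact ⟨fun ⟨p, hp⟩ => by simpa using hp, fun h => (AddSubgroup.mem_bot.1 h) ▸ zero_mem _⟩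

theorem degLT_mono : Monotone (degLT ι δ) := by
  rintro M N hMN _ ⟨p, rfl⟩
  refine ⟨fun i => if i < M then p i else 0, ?_⟩
  have htail : ∑ i ∈ Ico M N, ι (if i < M then p i else 0) * δ ^ i = 0 :=
    Finset.sum_eq_zero fun i hi => by simp [(mem_Ico.1 hi).1.not_gt]
  rw [← Finset.sum_range_add_sum_Ico _ hMN, htail, add_zero]
  exact Finset.sum_congr rfl fun i hi => by simp [mem_range.1 hi]

theorem monomial_mem_degLT {i N : ℕ} (hi : i < N) (x : F) : ι x * δ ^ i ∈ degLT ι δ N := by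
  refine degLT_mono hi ⟨fun k => if k = i then x else 0, ?_⟩
  rw [Finset.sum_eq_single i] <;> simp_all

theorem HasDeg.mem_degLT {P : A} {n : ℕ} (h : HasDeg ι δ P n) : P ∈ degLT ι δ (n + 1) :=
  let ⟨p, _, hp⟩ := h; ⟨p, hp⟩

theorem iota_mul_mem_degLT {P : A} {N : ℕ} (hP : P ∈ degLT ι δ N) (x : F) :
    ι x * P ∈ degLT ι δ N := by
  obtain ⟨p, rfl⟩ := hP
  exact ⟨fun i => x * p i, by simp [Finset.mul_sum, mul_assoc]⟩

theorem mul_delta_mem_degLT {P : A} {N : ℕ} (hP : P ∈ degLT ι δ N) :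
    P * δ ∈ degLT ι δ (N + 1) := by
  obtain ⟨p, rfl⟩ := hP
  rw [Finset.sum_mul]
  refine sum_mem fun i hi => ?_
  rw [mul_assoc, ← pow_succ]
  exact monomial_mem_degLT (by simpa using hi) _

theorem delta_mul_mem_degLT (hA : IsDiffOpRing d A ι δ) {P : A} {N : ℕ}
    (hP : P ∈ degLT ι δ N) : δ * P ∈ degLT ι δ (N + 1) := by
  obtain ⟨p, rfl⟩ := hP
  rw [Finset.mul_sum]
  refine sum_mem fun i hi => ?_
  rw [← mul_assoc, hA.comm, add_mul, mul_assoc, ← pow_succ']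
  have hi : i < N := mem_range.1 hi
  exact add_mem (monomial_mem_degLT (by omega) _) (monomial_mem_degLT (by omega) _)

theorem delta_pow_mul_iota_mem_degLT (hA : IsDiffOpRing d A ι δ) (k : ℕ) (x : F) :
    δ ^ k * ι x ∈ degLT ι δ (k + 1) := by
  induction k with
  | zero => simpa using monomial_mem_degLT (ι := ι) (δ := δ) zero_lt_one x
  | succ k ih =>
    rw [pow_succ', mul_assoc]
    exact delta_mul_mem_degLT hA ih

theorem mul_iota_mem_degLT (hA : IsDiffOpRing d A ι δ) {P : A} {N : ℕ}
    (hP : P ∈ degLT ι δ N) (x : F) : P * ι x ∈ degLT ι δ N := by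
  obtain ⟨p, rfl⟩ := hP
  rw [Finset.sum_mul]
  refine sum_mem fun i hi => ?_
  rw [mul_assoc]
  exact iota_mul_mem_degLT
    (degLT_mono (mem_range.1 hi) (delta_pow_mul_iota_mem_degLT hA i x)) _

theorem exists_mul_delta_add_of_mem_degLT_succ {P : A} {N : ℕ}
    (hP : P ∈ degLT ι δ (N + 1)) : ∃ S ∈ degLT ι δ N, ∃ c : F, P = S * δ + ι c := by
  obtain ⟨p, rfl⟩ := hP
  refine ⟨_, ⟨fun i => p (i + 1), rfl⟩, p 0, ?_⟩
  simp [Finset.sum_range_succ', Finset.sum_mul, pow_succ, mul_assoc]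

theorem exists_hasDeg_of_mem_degLT {P : A} {N : ℕ} (hP0 : P ≠ 0) (hP : P ∈ degLT ι δ N) :
    ∃ n < N, HasDeg ι δ P n := by
  induction N with
  | zero => exact absurd (by simpa [degLT_zero] using hP) hP0
  | succ N ih =>
    obtain ⟨p, hp⟩ := hP
    by_cases hpN : p N = 0
    · obtain ⟨n, hn, hdeg⟩ := ih ⟨p, by simpa [Finset.sum_range_succ, hpN] using hp⟩
      exact ⟨n, by omega, hdeg⟩
    · exact ⟨N, N.lt_succ_self, p, hpN, hp⟩

end Degree

theorem IsDerivation.linearIndependent_deriv_div {F : Type*} [Field F] {d : F → F}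
    (hd : IsDerivation d) {k : ℕ} {y : Fin (k + 1) → F}
    (hy : LinearIndependent (constants F d hd) y) :
    LinearIndependent (constants F d hd) fun i : Fin k => d (y i.succ / y 0) := by
  have hy0 : y 0 ≠ 0 := hy.ne_zero 0
  rw [Fintype.linearIndependent_iff] at hy ⊢
  intro g hg
  set s := ∑ i, g i • (y i.succ / y 0)
  have hs : s ∈ constants F d hd := by
    rw [hd.mem_constants, ← hd.toLinearMap_apply, map_sum]
    simp only [map_smul]
    exact hg
  have hrel : ∑ i, (Fin.cons (-⟨s, hs⟩) g : Fin (k + 1) → constants F d hd) i • y i = 0 := by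
    rw [Fin.sum_univ_succ]
    simp only [Fin.cons_zero, Fin.cons_succ, Subfield.smul_def, smul_eq_mul, s,
      Subfield.coe_neg]
    rw [neg_mul, Finset.sum_mul, neg_add_eq_zero]
    exact Finset.sum_congr rfl fun i _ => by rw [mul_assoc, div_mul_cancel₀ _ hy0]
  intro i
  simpa using hy _ hrel i.succ

section Kernel

variable {F : Type*} [Field F] {d : F → F} {A : Type*} [Ring A] {ι : F →+* A} {δ : A}

theorem card_lt_of_act_eq_zero (hd : IsDerivation d) (hA : IsDiffOpRing d A ι δ) {N k : ℕ}
    {P : A} {y : Fin k → F} (hP0 : P ≠ 0) (hP : P ∈ degLT ι δ N)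
    (hy : LinearIndependent (constants F d hd) y) (hPy : ∀ i, hA.act P (y i) = 0) : k < N := by
  induction N generalizing k P y with
  | zero => exact absurd (by simpa [degLT_zero] using hP) hP0
  | succ N ih =>
    rcases k with _ | k
    · omega
    have hy0 : y 0 ≠ 0 := hy.ne_zero 0
    -- `P * y₀` kills `1`, so it is `S * ∂`, and `S` kills the derivatives of the `yᵢ₊₁ / y₀`.
    obtain ⟨S, hS, c, hSc⟩ :=
      exists_mul_delta_add_of_mem_degLT_succ (mul_iota_mem_degLT hA hP (y 0))
    have hc : c = 0 := by
      have hc1 : hA.act (P * ι (y 0)) 1 = c := hA.act_eq (by rw [map_one, mul_one]; exact hSc)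
      rw [← hc1, hA.act_mul, hA.act_iota, mul_one, hPy]
    rw [hc, map_zero, add_zero] at hSc
    have hS0 : S ≠ 0 := by
      rintro rfl
      apply hP0
      simpa [mul_assoc, ← map_mul, hy0] using congrArg (· * ι (y 0)⁻¹) hSc
    have := ih hS0 hS (hd.linearIndependent_deriv_div hy) fun i => by
      rw [← hA.act_delta, ← hA.act_mul, ← hSc, hA.act_mul, hA.act_iota, mul_div_cancel₀ _ hy0,
        hPy]
    omega

theorem exists_act_eq_zero [NoZeroDivisors A] (hd : IsDerivation d) (hA : IsDiffOpRing d A ι δ)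
    {n : ℕ} (y : Fin n → F) : ∃ P ≠ 0, P ∈ degLT ι δ (n + 1) ∧ ∀ i, hA.act P (y i) = 0 := by
  induction n with
  | zero =>
    have : Nontrivial A := ⟨⟨δ, 0, hA.delta_ne_zero⟩⟩
    exact ⟨1, one_ne_zero, by simpa using monomial_mem_degLT (ι := ι) (δ := δ) zero_lt_one 1,
      fun i => i.elim0⟩
  | succ n ih =>
    set L := δ - ι (d (y 0) / y 0)
    obtain ⟨M, hM0, hM, hMy⟩ := ih fun i => hA.act L (y i.succ)
    refine ⟨M * L, mul_ne_zero hM0 (hA.delta_sub_iota_ne_zero _), ?_, Fin.cases ?_ fun i => ?_⟩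
    · rw [mul_sub]
      exact sub_mem (mul_delta_mem_degLT hM)
        (degLT_mono n.succ.le_succ (mul_iota_mem_degLT hA hM _))
    · rw [hA.act_mul, hA.act_delta_sub_logDeriv_self hd, hA.act_zero_right]
    · rw [hA.act_mul]
      exact hMy i

end Kernel

section Quotient

variable {F : Type*} [Field F] {d : F → F} {A : Type*} [Ring A] {ι : F →+* A} {δ : A}
  {K : Type*} [DivisionRing K] {j : A →+* K}

theorem inv_delta_notMem_range (hA : IsDiffOpRing d A ι δ) (hj : Function.Injective j) :
    (j δ)⁻¹ ∉ j.range := by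
  rintro ⟨S, hS⟩
  have hδ : j δ ≠ 0 := (map_ne_zero_iff j hj).2 hA.delta_ne_zero
  have : S * δ = ι 1 := hj (by rw [map_mul, hS, inv_mul_cancel₀ hδ, map_one, map_one])
  exact one_ne_zero (hA.eq_zero_of_mul_delta_eq_iota this)

theorem commute_iota_inv_delta (hA : IsDiffOpRing d A ι δ) {μ : F} (hμ : d μ = 0) :
    Commute (j (ι μ)) (j δ)⁻¹ := by
  refine (Commute.inv_left₀ ?_).symm
  change j δ * j (ι μ) = j (ι μ) * j δ
  rw [← map_mul, ← map_mul, hA.comm, hμ, map_zero, add_zero]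

variable (ι δ j) in
/-- The integration operator `x ∂⁻¹ y`. -/
def intTerm (x y : F) : K := j (ι x) * (j δ)⁻¹ * j (ι y)

theorem intTerm_zero_left (y : F) : intTerm ι δ j 0 y = 0 := by
  simp [intTerm]

theorem intTerm_add_left (x x' y : F) :
    intTerm ι δ j (x + x') y = intTerm ι δ j x y + intTerm ι δ j x' y := by
  simp only [intTerm, map_add, add_mul]

theorem intTerm_add_right (x y y' : F) :
    intTerm ι δ j x (y + y') = intTerm ι δ j x y + intTerm ι δ j x y' := by
  simp only [intTerm, map_add, mul_add]

theorem intTerm_sum_left {α : Type*} (s : Finset α) (x : α → F) (y : F) :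
    intTerm ι δ j (∑ i ∈ s, x i) y = ∑ i ∈ s, intTerm ι δ j (x i) y := by
  simp only [intTerm, map_sum, Finset.sum_mul]

theorem intTerm_sum_right {α : Type*} (s : Finset α) (x : F) (y : α → F) :
    intTerm ι δ j x (∑ i ∈ s, y i) = ∑ i ∈ s, intTerm ι δ j x (y i) := by
  simp only [intTerm, map_sum, Finset.mul_sum]

theorem intTerm_smul_comm (hd : IsDerivation d) (hA : IsDiffOpRing d A ι δ)
    (μ : constants F d hd) (x y : F) : intTerm ι δ j (μ • x) y = intTerm ι δ j x (μ • y) := by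
  simp only [intTerm, Subfield.smul_def, smul_eq_mul, map_mul]
  rw [← map_mul, ← map_mul, mul_comm (μ : F) x, map_mul, map_mul, mul_assoc (j (ι x)),
    (commute_iota_inv_delta hA (hd.mem_constants.1 μ.2)).eq]
  simp only [mul_assoc]

theorem mul_intTerm_sub_mem_range (hA : IsDiffOpRing d A ι δ) (hj : Function.Injective j)
    (P : A) (x y : F) : j P * intTerm ι δ j x y - intTerm ι δ j (hA.act P x) y ∈ j.range := by
  obtain ⟨R, hR⟩ := hA.exists_mul_iota_eq P x
  have hδ : j δ ≠ 0 := (map_ne_zero_iff j hj).2 hA.delta_ne_zero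
  refine ⟨R * ι y, ?_⟩
  simp only [intTerm]
  rw [← mul_assoc, ← mul_assoc, ← map_mul, hR, ← sub_mul, ← sub_mul, map_add, add_sub_cancel_right,
    map_mul, map_mul, mul_assoc (j R), mul_inv_cancel₀ hδ, mul_one]

theorem mul_sum_intTerm_mem_range_iff (hA : IsDiffOpRing d A ι δ) (hj : Function.Injective j)
    (P : A) {α : Type*} (s : Finset α) (c b : α → F) :
    j P * ∑ i ∈ s, intTerm ι δ j (c i) (b i) ∈ j.range ↔
      ∑ i ∈ s, intTerm ι δ j (hA.act P (c i)) (b i) ∈ j.range := by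
  have hdiff : j P * ∑ i ∈ s, intTerm ι δ j (c i) (b i) -
      ∑ i ∈ s, intTerm ι δ j (hA.act P (c i)) (b i) ∈ j.range := by
    rw [Finset.mul_sum, ← Finset.sum_sub_distrib]
    exact sum_mem fun i _ => mul_intTerm_sub_mem_range hA hj P (c i) (b i)
  exact ⟨fun h => by simpa using sub_mem h hdiff, fun h => by simpa using add_mem hdiff h⟩

theorem intTerm_notMem_range (hA : IsDiffOpRing d A ι δ) (hj : Function.Injective j) {x y : F}
    (hx : x ≠ 0) (hy : y ≠ 0) : intTerm ι δ j x y ∉ j.range := by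
  intro h
  apply inv_delta_notMem_range hA hj
  have hinv : (j δ)⁻¹ = j (ι x⁻¹) * intTerm ι δ j x y * j (ι y⁻¹) := by
    rw [intTerm, ← mul_assoc, ← mul_assoc, ← map_mul, ← map_mul, inv_mul_cancel₀ hx, map_one,
      map_one, one_mul, mul_assoc, ← map_mul, ← map_mul, mul_inv_cancel₀ hy, map_one, map_one,
      mul_one]
  rw [hinv]
  exact mul_mem (mul_mem (j.mem_range_self _) h) (j.mem_range_self _)

theorem sum_intTerm_notMem_range (hd : IsDerivation d) (hA : IsDiffOpRing d A ι δ)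
    (hj : Function.Injective j) {α : Type*} [Fintype α] {c b : α → F}
    (hb : LinearIndependent (constants F d hd) b) {v : F} (hv : v ≠ 0)
    (hcv : ∀ i, c i / v ∈ constants F d hd) (hc : c ≠ 0) :
    ∑ i, intTerm ι δ j (c i) (b i) ∉ j.range := by
  set μ : α → constants F d hd := fun i => ⟨c i / v, hcv i⟩
  have hsum : ∑ i, intTerm ι δ j (c i) (b i) = intTerm ι δ j v (∑ i, μ i • b i) := by
    rw [intTerm_sum_right]
    refine Finset.sum_congr rfl fun i _ => ?_
    rw [← intTerm_smul_comm hd hA, Subfield.smul_def, smul_eq_mul, div_mul_cancel₀ _ hv]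
  have hμ : ∑ i, μ i • b i ≠ 0 := by
    intro h0
    apply hc
    funext i
    have hμi : c i / v = 0 := congrArg Subtype.val (Fintype.linearIndependent_iff.1 hb μ h0 i)
    simpa [hv] using hμi
  rw [hsum]
  exact intTerm_notMem_range hA hj hv hμ

theorem eq_zero_of_sum_intTerm_mem_range (hd : IsDerivation d) (hA : IsDiffOpRing d A ι δ)
    (hj : Function.Injective j) {n : ℕ} {c b : Fin n → F}
    (hb : LinearIndependent (constants F d hd) b)
    (h : ∑ i, intTerm ι δ j (c i) (b i) ∈ j.range) : c = 0 := by
  induction n with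
  | zero => exact funext fun i => i.elim0
  | succ n ih =>
    have hb' := hb.comp _ (Fin.castSucc_injective n)
    by_cases hv : c (Fin.last n) = 0
    · rw [Fin.sum_univ_castSucc, hv, intTerm_zero_left, add_zero] at h
      funext i
      exact Fin.lastCases hv (fun i => congrFun (ih hb' h) i) i
    · set v := c (Fin.last n)
      -- `∂ - v'/v` kills the last coefficient, so induction applies to the transformed sum.
      have hL := (mul_sum_intTerm_mem_range_iff hA hj (δ - ι (d v / v)) _ c b).1
        (mul_mem (j.mem_range_self _) h)
      rw [Fin.sum_univ_castSucc, hA.act_delta_sub_logDeriv_self hd, intTerm_zero_left,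
        add_zero] at hL
      have hcv : ∀ i, c i / v ∈ constants F d hd := Fin.lastCases
        (by rw [div_self hv]; exact one_mem _)
        fun i => hd.div_mem_constants hv (by
          rw [← hA.act_delta_sub_logDeriv]; exact congrFun (ih hb' hL) i)
      exact absurd h (sum_intTerm_notMem_range hd hA hj hb hv hcv fun h0 => hv (congrFun h0 _))

theorem lt_of_mul_sum_intTerm_mem_range (hd : IsDerivation d) (hA : IsDiffOpRing d A ι δ)
    (hj : Function.Injective j) {n N : ℕ} {c b : Fin n → F}
    (hc : LinearIndependent (constants F d hd) c) (hb : LinearIndependent (constants F d hd) b)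
    {P : A} (hP0 : P ≠ 0) (hP : P ∈ degLT ι δ N)
    (h : j P * ∑ i, intTerm ι δ j (c i) (b i) ∈ j.range) : n < N :=
  card_lt_of_act_eq_zero hd hA hP0 hP hc fun i => congrFun
    (eq_zero_of_sum_intTerm_mem_range hd hA hj hb
      ((mul_sum_intTerm_mem_range_iff hA hj P _ c b).1 h)) i

theorem exists_mul_sum_intTerm_mem_range [NoZeroDivisors A] (hd : IsDerivation d)
    (hA : IsDiffOpRing d A ι δ) (hj : Function.Injective j) {n : ℕ} (c b : Fin n → F) :
    ∃ P ≠ 0, P ∈ degLT ι δ (n + 1) ∧ j P * ∑ i, intTerm ι δ j (c i) (b i) ∈ j.range := by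
  obtain ⟨P, hP0, hP, hPc⟩ := exists_act_eq_zero hd hA c
  refine ⟨P, hP0, hP, (mul_sum_intTerm_mem_range_iff hA hj P _ c b).2 ?_⟩
  simp [hPc, intTerm_zero_left]

theorem HasLength.eq_of_linearIndependent (hd : IsDerivation d) (hA : IsDiffOpRing d A ι δ)
    (hj : Function.Injective j) {f : K} {ℓ n : ℕ} (hℓ : HasLength ι δ j f ℓ) {a : F}
    {c b : Fin n → F} (hf : f = j (ι a) + ∑ i, intTerm ι δ j (c i) (b i))
    (hc : LinearIndependent (constants F d hd) c) (hb : LinearIndependent (constants F d hd) b) :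
    ℓ = n := by
  have : NoZeroDivisors A := hj.noZeroDivisors j (map_zero j) (map_mul j)
  have hrange (P : A) :
      j P * f ∈ j.range ↔ j P * ∑ i, intTerm ι δ j (c i) (b i) ∈ j.range := by
    rw [hf, mul_add, ← map_mul]
    exact add_mem_cancel_left (j.mem_range_self _)
  have hquot {P Q : A} (hP0 : P ≠ 0) : f = (j P)⁻¹ * j Q ↔ j P * f = j Q :=
    eq_inv_mul_iff_mul_eq₀ ((map_ne_zero_iff j hj).2 hP0)
  apply le_antisymm
  · obtain ⟨P, hP0, hP, hPf⟩ := exists_mul_sum_intTerm_mem_range hd hA hj c b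
    obtain ⟨Q, hQ⟩ := (hrange P).2 hPf
    obtain ⟨m, hm, hdeg⟩ := exists_hasDeg_of_mem_degLT hP0 hP
    have := hℓ.2 P Q m hP0 ((hquot hP0).2 hQ.symm) hdeg
    omega
  · obtain ⟨P, Q, hP0, hPQ, hdeg⟩ := hℓ.1
    have := lt_of_mul_sum_intTerm_mem_range hd hA hj hc hb hP0 hdeg.mem_degLT
      ((hrange P).1 ⟨Q, ((hquot hP0).1 hPQ).symm⟩)
    omega

end Quotient

section Presentation

variable {F : Type*} [Field F] {d : F → F} {A : Type*} [Ring A] {ι : F →+* A} {δ : A}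
  {K : Type*} [DivisionRing K] {j : A →+* K}

variable (ι δ j) in
def HasPresentation (f : K) (m : ℕ) : Prop :=
  ∃ (a : F) (c b : Fin m → F), f = j (ι a) + ∑ i, intTerm ι δ j (c i) (b i)

theorem hasPresentation_iff_exists_range {f : K} {m : ℕ} :
    HasPresentation ι δ j f m ↔ ∃ (a : F) (aa bb : ℕ → F),
      f = j (ι a) + ∑ i ∈ range m, j (ι (aa i)) * (j δ)⁻¹ * j (ι (bb i)) := by
  constructor
  · rintro ⟨a, c, b, rfl⟩
    refine ⟨a, fun i => if h : i < m then c ⟨i, h⟩ else 0,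
      fun i => if h : i < m then b ⟨i, h⟩ else 0, ?_⟩
    rw [Finset.sum_range]
    simp [intTerm]
  · rintro ⟨a, aa, bb, rfl⟩
    exact ⟨a, fun i => aa i, fun i => bb i, by rw [Finset.sum_range]; rfl⟩

/-- Constants commute with `∂⁻¹`, so a linear relation over the constants among the `cᵢ` (or
among the `bᵢ`) lets one term be absorbed into the others. -/
theorem HasPresentation.of_not_linearIndependent (hd : IsDerivation d)
    (hA : IsDiffOpRing d A ι δ) {f : K} {m : ℕ} {a : F} {c b : Fin (m + 1) → F}
    (hf : f = j (ι a) + ∑ i, intTerm ι δ j (c i) (b i))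
    (hcb : ¬(LinearIndependent (constants F d hd) c ∧ LinearIndependent (constants F d hd) b)) :
    HasPresentation ι δ j f m := by
  rcases not_and_or.1 hcb with hc | hb
  · obtain ⟨k, μ, hk⟩ := exists_eq_sum_smul_succAbove_of_not_linearIndependent hc
    refine ⟨a, fun i => c (k.succAbove i), fun i => b (k.succAbove i) + μ i • b k, ?_⟩
    rw [hf, Fin.sum_univ_succAbove _ k, hk, intTerm_sum_left, ← Finset.sum_add_distrib]
    congr 1
    refine Finset.sum_congr rfl fun i _ => ?_
    rw [intTerm_smul_comm hd hA, ← intTerm_add_right, add_comm]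
  · obtain ⟨k, μ, hk⟩ := exists_eq_sum_smul_succAbove_of_not_linearIndependent hb
    refine ⟨a, fun i => c (k.succAbove i) + μ i • c k, fun i => b (k.succAbove i), ?_⟩
    rw [hf, Fin.sum_univ_succAbove _ k, hk, intTerm_sum_right, ← Finset.sum_add_distrib]
    congr 1
    refine Finset.sum_congr rfl fun i _ => ?_
    rw [← intTerm_smul_comm hd hA, ← intTerm_add_left, add_comm]

theorem HasPresentation.exists_linearIndependent (hd : IsDerivation d)
    (hA : IsDiffOpRing d A ι δ) {f : K} {n : ℕ} (h : HasPresentation ι δ j f n) :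
    ∃ m ≤ n, ∃ (a : F) (c b : Fin m → F), f = j (ι a) + ∑ i, intTerm ι δ j (c i) (b i) ∧
      LinearIndependent (constants F d hd) c ∧ LinearIndependent (constants F d hd) b := by
  induction n with
  | zero =>
    obtain ⟨a, c, b, hf⟩ := h
    exact ⟨0, le_rfl, a, c, b, hf, linearIndependent_empty_type, linearIndependent_empty_type⟩
  | succ n ih =>
    obtain ⟨a, c, b, hf⟩ := h
    by_cases hcb : LinearIndependent (constants F d hd) c ∧ LinearIndependent (constants F d hd) b
    · exact ⟨n + 1, le_rfl, a, c, b, hf, hcb⟩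
    · obtain ⟨m, hm, hpres⟩ := ih (HasPresentation.of_not_linearIndependent hd hA hf hcb)
      exact ⟨m, hm.trans n.le_succ, hpres⟩

end Presentation

theorem length_le_numTerms_and_exists_short_presentation_general {F : Type*} [Field F]
    (d : F → F) (hd : IsDerivation d)
    {A : Type*} [Ring A] (ι : F →+* A) (δ : A) (hA : IsDiffOpRing d A ι δ)
    {K : Type*} [DivisionRing K] (j : A →+* K) (hK : IsQuotientDivisionRing A K j)
    (n : ℕ) (a : F) (aa bb : ℕ → F) (f : K)
    (hf : f = j (ι a) + ∑ i ∈ Finset.range n, j (ι (aa i)) * (j δ)⁻¹ * j (ι (bb i)))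
    (ℓ : ℕ) (hℓ : HasLength ι δ j f ℓ) :
    ℓ ≤ n ∧ ∃ (a' : F) (aa' bb' : ℕ → F),
      f = j (ι a') + ∑ i ∈ Finset.range ℓ, j (ι (aa' i)) * (j δ)⁻¹ * j (ι (bb' i)) := by
  obtain ⟨m, hmn, a', c, b, hf', hc, hb⟩ :=
    (hasPresentation_iff_exists_range.2 ⟨a, aa, bb, hf⟩).exists_linearIndependent hd hA
  obtain rfl : ℓ = m := hℓ.eq_of_linearIndependent hd hA hK.inj hf' hc hb
  exact ⟨hmn, hasPresentation_iff_exists_range.1 ⟨a', c, b, hf'⟩⟩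

/-- If `I = a + Σ_{i=1}^n aᵢ ∂⁻¹ bᵢ ∈ F⟨∂⁻¹⟩`, then `L(I) ≤ n`; moreover `I`
admits a presentation of the same form with exactly `L(I)` summands. -/
theorem length_le_numTerms_and_exists_short_presentation {F : Type*} [Field F] [CharZero F]
    (d : F → F) (hd : IsDerivation d)
    (halg : IsAlgClosed (constants F d hd))
    (hne : constants F d hd ≠ ⊤)
    {A : Type*} [Ring A] (ι : F →+* A) (δ : A) (hA : IsDiffOpRing d A ι δ)
    {K : Type*} [DivisionRing K] (j : A →+* K) (hK : IsQuotientDivisionRing A K j)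
    (n : ℕ) (a : F) (aa bb : ℕ → F) (f : K)
    (hf : f = j (ι a) + ∑ i ∈ Finset.range n, j (ι (aa i)) * (j δ)⁻¹ * j (ι (bb i)))
    (ℓ : ℕ) (hℓ : HasLength ι δ j f ℓ) :
    ℓ ≤ n ∧ ∃ (a' : F) (aa' bb' : ℕ → F),
      f = j (ι a') + ∑ i ∈ Finset.range ℓ, j (ι (aa' i)) * (j δ)⁻¹ * j (ι (bb' i)) :=
  length_le_numTerms_and_exists_short_presentation_general d hd ι δ hA j hK n a aa bb f hf ℓ hℓ
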